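/- arXiv:2512.22885 — 2 statements merged into one kernel-verified Lean document; each statement's English description precedes it below -/
import Mathlib

section
/- For each integer m ≥ 1 and R > 0, define η_m(R) = (tanh(R/2))^{2m} sinh R / ∫₀^R (tanh(r/2))^{2m} sinh r dr. Then the function R ↦ η_m(R) · sinh R is strictly increasing on (0, +∞). -/
open Real Set

private lemma tanh_fun_eq : Real.tanh = fun x => Real.sinh x / Real.cosh x :=
  funext fun x => Real.tanh_eq_sinh_div_cosh x

private lemma my_continuous_tanh : Continuous Real.tanh := by
  rw [tanh_fun_eq]
  exact Real.continuous_sinh.div Real.continuous_cosh fun x => (Real.cosh_pos x).ne'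

private lemma my_hasDerivAt_tanh (x : ℝ) :
    HasDerivAt Real.tanh (1 - Real.tanh x ^ 2) x := by
  have h := (Real.hasDerivAt_sinh x).div (Real.hasDerivAt_cosh x) (Real.cosh_pos x).ne'
  have hc := (Real.cosh_pos x).ne'
  rw [tanh_fun_eq]
  refine h.congr_deriv (Eq.symm ?_)
  field_simp

private lemma tanh_half_pos {x : ℝ} (hx : 0 < x) : 0 < Real.tanh (x / 2) := by
  rw [Real.tanh_eq_sinh_div_cosh]
  exact div_pos (by rw [Real.sinh_pos_iff]; linarith) (Real.cosh_pos _)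

private lemma sinh_half_identity (R : ℝ) :
    (1 - Real.tanh (R / 2) ^ 2) * Real.sinh R = 2 * Real.tanh (R / 2) := by
  have h2u : Real.sinh R = 2 * Real.sinh (R / 2) * Real.cosh (R / 2) := by
    rw [← Real.sinh_two_mul]; ring_nf
  have hc := (Real.cosh_pos (R / 2)).ne'
  rw [h2u, Real.tanh_eq_sinh_div_cosh]
  field_simp
  linear_combination Real.sinh (R / 2) * Real.cosh_sq_sub_sinh_sq (R / 2)

private lemma hasDerivAt_g (m : ℕ) (hm : 1 ≤ m) (R : ℝ) :
    HasDerivAt (fun r => Real.tanh (r / 2) ^ (2 * m) * Real.sinh r)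
      (Real.tanh (R / 2) ^ (2 * m) * (2 * (m : ℝ) + Real.cosh R)) R := by
  have h0 : HasDerivAt (fun r : ℝ => r / 2) (1 / 2) R := by
    simpa using (hasDerivAt_id R).div_const 2
  have h1 : HasDerivAt (fun r : ℝ => Real.tanh (r / 2))
      ((1 - Real.tanh (R / 2) ^ 2) * (1 / 2)) R :=
    (my_hasDerivAt_tanh (R / 2)).comp (h₂ := Real.tanh) R h0
  have h2 := (h1.pow (2 * m)).mul (Real.hasDerivAt_sinh R)
  refine h2.congr_deriv (Eq.symm ?_)
  have hpow : Real.tanh (R / 2) ^ (2 * m - 1) * Real.tanh (R / 2)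
      = Real.tanh (R / 2) ^ (2 * m) := by
    rw [← pow_succ]; congr 1; omega
  have hT := sinh_half_identity R
  simp only [Pi.pow_apply]
  push_cast
  linear_combination (-(m : ℝ) * Real.tanh (R / 2) ^ (2 * m - 1)) * hT
    - (2 * (m : ℝ)) * hpow

private lemma continuous_g (m : ℕ) :
    Continuous (fun r : ℝ => Real.tanh (r / 2) ^ (2 * m) * Real.sinh r) :=
  ((my_continuous_tanh.comp (continuous_id.div_const 2)).pow _).mul Real.continuous_sinh

private lemma hasDerivAt_I (m : ℕ) (R : ℝ) :
    HasDerivAt (fun R : ℝ => ∫ r in (0:ℝ)..R, Real.tanh (r / 2) ^ (2 * m) * Real.sinh r)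
      (Real.tanh (R / 2) ^ (2 * m) * Real.sinh R) R :=
  intervalIntegral.integral_hasDerivAt_right
    ((continuous_g m).intervalIntegrable 0 R)
    ((continuous_g m).stronglyMeasurable.stronglyMeasurableAtFilter)
    (continuous_g m).continuousAt

private lemma I_pos (m : ℕ) {R : ℝ} (hR : 0 < R) :
    0 < ∫ r in (0:ℝ)..R, Real.tanh (r / 2) ^ (2 * m) * Real.sinh r := by
  apply intervalIntegral.intervalIntegral_pos_of_pos_on
    ((continuous_g m).intervalIntegrable 0 R) _ hR
  intro x hx
  have hx0 : 0 < x := hx.1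
  exact mul_pos (pow_pos (tanh_half_pos hx0) _) (by rwa [Real.sinh_pos_iff])

/-- Key integral lower bound:  ∫₀ᴿ g  >  g(R)·sinh R / (2m + 2 cosh R)  for R > 0. -/
private lemma key_lower (m : ℕ) (hm : 1 ≤ m) {R : ℝ} (hR : 0 < R) :
    Real.tanh (R / 2) ^ (2 * m) * Real.sinh R * Real.sinh R
      < (2 * (m : ℝ) + 2 * Real.cosh R) *
        ∫ r in (0:ℝ)..R, Real.tanh (r / 2) ^ (2 * m) * Real.sinh r := by
  set g : ℝ → ℝ := fun r => Real.tanh (r / 2) ^ (2 * m) * Real.sinh r with hg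
  set F : ℝ → ℝ := fun R => (∫ r in (0:ℝ)..R, g r)
      - g R * Real.sinh R / (2 * (m : ℝ) + 2 * Real.cosh R) with hF
  have hDpos : ∀ x : ℝ, (0:ℝ) < 2 * (m : ℝ) + 2 * Real.cosh x := by
    intro x
    have := Real.cosh_pos x
    have : (1:ℝ) ≤ (m:ℝ) := by exact_mod_cast hm
    nlinarith [Real.cosh_pos x]
  have hF' : ∀ x : ℝ, HasDerivAt F
      (2 * g x * Real.sinh x ^ 2 / (2 * (m : ℝ) + 2 * Real.cosh x) ^ 2) x := by
    intro x
    have hN := (hasDerivAt_g m hm x).mul (Real.hasDerivAt_sinh x)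
    have hD : HasDerivAt (fun x : ℝ => 2 * (m : ℝ) + 2 * Real.cosh x)
        (2 * Real.sinh x) x := by
      simpa using ((Real.hasDerivAt_cosh x).const_mul 2).const_add (2 * (m : ℝ))
    have hquot := hN.div hD (hDpos x).ne'
    have := (hasDerivAt_I m x).sub hquot
    refine this.congr_deriv (Eq.symm ?_)
    have hD0 := (hDpos x).ne'
    simp only [hg]
    field_simp
    simp only [Pi.mul_apply]
    ring
  have hmono : StrictMonoOn F (Ici 0) := by
    apply strictMonoOn_of_deriv_pos (convex_Ici 0)
      (fun x _ => ((hF' x).differentiableAt.continuousAt.continuousWithinAt))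
    intro x hx
    rw [interior_Ici, mem_Ioi] at hx
    rw [(hF' x).deriv]
    have hgx : 0 < g x :=
      mul_pos (pow_pos (tanh_half_pos hx) _) (by rwa [Real.sinh_pos_iff])
    have hs : 0 < Real.sinh x := by rwa [Real.sinh_pos_iff]
    positivity
  have h0 : F 0 = 0 := by
    simp [hF, hg]
  have := hmono Set.self_mem_Ici (Set.mem_Ici.mpr hR.le) hR
  rw [h0] at this
  have hI := this
  rw [hF] at hI
  simp only [hg] at hI ⊢
  have hD0 := hDpos R
  rw [sub_pos, div_lt_iff₀ hD0] at hI
  linarith [hI]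

theorem eta_sinh_strictMono (m : ℕ) (hm : 1 ≤ m) :
    StrictMonoOn
      (fun R : ℝ =>
        (Real.tanh (R/2)^(2*m) * Real.sinh R /
          ∫ r in (0:ℝ)..R, Real.tanh (r/2)^(2*m) * Real.sinh r) * Real.sinh R)
      (Set.Ioi 0) := by
  have hderiv : ∀ R ∈ Set.Ioi (0:ℝ),
      HasDerivAt (fun R : ℝ =>
        (Real.tanh (R/2)^(2*m) * Real.sinh R /
          ∫ r in (0:ℝ)..R, Real.tanh (r/2)^(2*m) * Real.sinh r) * Real.sinh R)
        ((((Real.tanh (R / 2) ^ (2 * m) * (2 * (m : ℝ) + Real.cosh R)) *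
            (∫ r in (0:ℝ)..R, Real.tanh (r/2)^(2*m) * Real.sinh r)
          - (Real.tanh (R/2)^(2*m) * Real.sinh R) *
            (Real.tanh (R/2)^(2*m) * Real.sinh R)) /
            (∫ r in (0:ℝ)..R, Real.tanh (r/2)^(2*m) * Real.sinh r) ^ 2) * Real.sinh R
          + (Real.tanh (R/2)^(2*m) * Real.sinh R /
            ∫ r in (0:ℝ)..R, Real.tanh (r/2)^(2*m) * Real.sinh r) * Real.cosh R) R := by
    intro R hR
    exact ((hasDerivAt_g m hm R).div (hasDerivAt_I m R) (I_pos m hR).ne').mul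
      (Real.hasDerivAt_sinh R)
  apply strictMonoOn_of_deriv_pos (convex_Ioi 0)
    (fun x hx => ((hderiv x hx).differentiableAt.continuousAt.continuousWithinAt))
  intro R hR
  rw [interior_Ioi] at hR
  rw [(hderiv R hR).deriv]
  have hRpos : (0:ℝ) < R := hR
  set T : ℝ := Real.tanh (R / 2) ^ (2 * m) with hT
  set I : ℝ := ∫ r in (0:ℝ)..R, Real.tanh (r/2)^(2*m) * Real.sinh r with hIdef
  have hIpos : 0 < I := I_pos m hRpos
  have hkey := key_lower m hm hRpos
  rw [← hT, ← hIdef] at hkey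
  have hs : 0 < Real.sinh R := by rwa [Real.sinh_pos_iff]
  have hc : 0 < Real.cosh R := Real.cosh_pos R
  have hTpos : 0 < T := pow_pos (tanh_half_pos hRpos) _
  have hexpr : ((T * (2 * (m : ℝ) + Real.cosh R) * I - T * Real.sinh R * (T * Real.sinh R))
      / I ^ 2) * Real.sinh R + (T * Real.sinh R / I) * Real.cosh R
      = (T * Real.sinh R * ((2 * (m : ℝ) + 2 * Real.cosh R) * I
          - T * Real.sinh R * Real.sinh R)) / I ^ 2 := by
    field_simp
    ring
  rw [hexpr]
  apply div_pos _ (pow_pos hIpos 2)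
  apply mul_pos (mul_pos hTpos hs)
  linarith
end

section
/- For each integer m ≥ 1 and R > 0, define η_m(R) = (tanh(R/2))^{2m} sinh R / ∫₀^R (tanh(r/2))^{2m} sinh r dr. Then the function R ↦ η_m(R) · tanh(R/2) is strictly decreasing on (0, +∞). -/
open Real Set

private lemma hasDerivAt_tanh_half (R : ℝ) :
    HasDerivAt (fun x : ℝ => Real.tanh (x/2)) (1 / (2 * Real.cosh (R/2)^2)) R := by
  have hv : Real.cosh (R/2) ≠ 0 := (Real.cosh_pos _).ne'
  have half : HasDerivAt (fun x : ℝ => x/2) (1/2) R := by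
    simpa using (hasDerivAt_id R).div_const 2
  have hu : HasDerivAt (fun x : ℝ => Real.sinh (x/2)) (Real.cosh (R/2) * (1/2)) R :=
    by have := (Real.hasDerivAt_sinh (R/2)).comp R half; exact this
  have hw : HasDerivAt (fun x : ℝ => Real.cosh (x/2)) (Real.sinh (R/2) * (1/2)) R :=
    by have := (Real.hasDerivAt_cosh (R/2)).comp R half; exact this
  have h : HasDerivAt (fun x : ℝ => Real.sinh (x/2) / Real.cosh (x/2)) _ R := hu.div hw hv
  have heq : (fun x : ℝ => Real.sinh (x/2) / Real.cosh (x/2)) = fun x : ℝ => Real.tanh (x/2) := by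
    funext x; rw [Real.tanh_eq_sinh_div_cosh]
  rw [heq] at h
  convert h using 1
  have h1 : Real.cosh (R/2)^2 - Real.sinh (R/2)^2 = 1 := Real.cosh_sq_sub_sinh_sq _
  field_simp
  nlinarith [h1]

private lemma aux_main (k : ℕ) (hk : 1 ≤ k) :
    StrictAntiOn
      (fun R : ℝ =>
        (Real.tanh (R/2)^k * Real.sinh R /
          ∫ r in (0:ℝ)..R, Real.tanh (r/2)^k * Real.sinh r) * Real.tanh (R/2))
      (Set.Ioi 0) := by
  obtain ⟨j, rfl⟩ : ∃ j, k = j + 1 := ⟨k - 1, by omega⟩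
  -- basic functions
  set f : ℝ → ℝ := fun R => Real.tanh (R/2)^(j+1) * Real.sinh R with hfdef
  set I : ℝ → ℝ := fun R => ∫ r in (0:ℝ)..R, f r with hIdef
  set g : ℝ → ℝ := fun R => Real.tanh (R/2)^(j+1) * Real.sinh R * Real.tanh (R/2) with hgdef
  set K : ℝ → ℝ := fun R => Real.cosh R + ((j:ℝ) + 2) with hKdef
  set ψ : ℝ → ℝ := fun R => Real.tanh (R/2)^(j+1) * Real.sinh R^2 / K R with hψdef
  set Dg : ℝ → ℝ := fun R => Real.tanh (R/2)^(j+2) * (((j:ℝ)+1) + 2*Real.cosh (R/2)^2) with hDgdef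
  set Dψ : ℝ → ℝ := fun R =>
    Real.tanh (R/2)^(j+2) * Real.cosh (R/2)^2 *
      ((8*Real.cosh (R/2)^2 + 2*(j:ℝ) - 2) * K R - 8*Real.tanh (R/2)^2*Real.cosh (R/2)^4)
        / (K R)^2 with hDψdef
  -- continuity
  have htc : Continuous (fun x : ℝ => Real.tanh (x/2)) := by
    have heq : (fun x : ℝ => Real.tanh (x/2)) = fun x : ℝ => Real.sinh (x/2) / Real.cosh (x/2) := by
      funext x; rw [Real.tanh_eq_sinh_div_cosh]
    rw [heq]
    exact (Real.continuous_sinh.comp (continuous_id.div_const 2)).div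
      (Real.continuous_cosh.comp (continuous_id.div_const 2)) (fun x => (Real.cosh_pos _).ne')
  have hcc : Continuous (fun x : ℝ => Real.cosh (x/2)) :=
    Real.continuous_cosh.comp (continuous_id.div_const 2)
  have hfc : Continuous f := ((htc.pow _).mul Real.continuous_sinh)
  have hgc : Continuous g := hfc.mul htc
  have hK0 : ∀ R, (0:ℝ) < K R := by
    intro R
    have := Real.one_le_cosh R
    simp only [hKdef]
    positivity
  have hψc : Continuous ψ :=
    ((htc.pow _).mul (Real.continuous_sinh.pow 2)).div
      (Real.continuous_cosh.add continuous_const) (fun R => (hK0 R).ne')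
  -- FTC
  have hI : ∀ R, HasDerivAt I (f R) R := by
    intro R
    exact intervalIntegral.integral_hasDerivAt_right (hfc.intervalIntegrable _ _)
      (hfc.stronglyMeasurableAtFilter _ _) hfc.continuousAt
  have hIc : Continuous I := by
    rw [continuous_iff_continuousAt]; exact fun R => (hI R).continuousAt
  -- positivity
  have htpos : ∀ R : ℝ, 0 < R → 0 < Real.tanh (R/2) := by
    intro R hR
    rw [Real.tanh_eq_sinh_div_cosh]
    exact div_pos (by rw [Real.sinh_pos_iff]; linarith) (Real.cosh_pos _)
  have hfpos : ∀ R : ℝ, 0 < R → 0 < f R := by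
    intro R hR
    exact mul_pos (pow_pos (htpos R hR) _) (by rw [Real.sinh_pos_iff]; exact hR)
  have hgpos : ∀ R : ℝ, 0 < R → 0 < g R := by
    intro R hR
    exact mul_pos (hfpos R hR) (htpos R hR)
  have hIpos : ∀ R : ℝ, 0 < R → 0 < I R := by
    intro R hR
    exact intervalIntegral.intervalIntegral_pos_of_pos_on (hfc.intervalIntegrable _ _)
      (fun x hx => hfpos x hx.1) hR
  -- half angle identities
  have hS2 : ∀ R : ℝ, Real.sinh R = 2 * Real.tanh (R/2) * Real.cosh (R/2)^2 := by
    intro R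
    have h1 : Real.sinh R = 2 * Real.sinh (R/2) * Real.cosh (R/2) := by
      rw [← Real.sinh_two_mul]; ring_nf
    have h2 : Real.sinh (R/2) = Real.tanh (R/2) * Real.cosh (R/2) := by
      rw [Real.tanh_eq_sinh_div_cosh]
      field_simp
    rw [h1, h2]; ring
  have hC2 : ∀ R : ℝ, Real.cosh R = 2 * Real.cosh (R/2)^2 - 1 := by
    intro R
    have h1 : Real.cosh R = Real.cosh (R/2)^2 + Real.sinh (R/2)^2 := by
      rw [← Real.cosh_two_mul]; ring_nf
    have h2 : Real.cosh (R/2)^2 - Real.sinh (R/2)^2 = 1 := Real.cosh_sq_sub_sinh_sq _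
    nlinarith
  -- derivative of g
  have hg : ∀ R : ℝ, HasDerivAt g (Dg R) R := by
    intro R
    have hv : Real.cosh (R/2) ≠ 0 := (Real.cosh_pos _).ne'
    have h : HasDerivAt g _ R := (((hasDerivAt_tanh_half R).pow (j+1)).mul (Real.hasDerivAt_sinh R)).mul
      (hasDerivAt_tanh_half R)
    convert h using 1
    rw [hDgdef]
    simp only [Nat.add_sub_cancel, Pi.pow_apply, Pi.mul_apply]
    rw [hS2 R, hC2 R]
    field_simp
    push_cast
    ring
  -- derivative of ψ
  have hψ : ∀ R : ℝ, HasDerivAt ψ (Dψ R) R := by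
    intro R
    have hv : Real.cosh (R/2) ≠ 0 := (Real.cosh_pos _).ne'
    have hden : HasDerivAt K (Real.sinh R) R := by
      exact (Real.hasDerivAt_cosh R).add_const ((j:ℝ)+2)
    have h : HasDerivAt ψ _ R := (((hasDerivAt_tanh_half R).pow (j+1)).mul
      ((Real.hasDerivAt_sinh R).pow 2)).div hden (hK0 R).ne'
    convert h using 1
    rw [hDψdef]
    simp only [Nat.add_sub_cancel, Pi.pow_apply, Pi.mul_apply]
    rw [hS2 R, hC2 R]
    have hKne : K R ≠ 0 := (hK0 R).ne'
    push_cast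
    field_simp
    ring
  -- Dg positive
  have hDgpos : ∀ R : ℝ, 0 < R → 0 < Dg R := by
    intro R hR
    have := htpos R hR
    have := Real.cosh_pos (R/2)
    simp only [hDgdef]
    positivity
  -- ψ * Dg = f * g
  have hkey : ∀ R : ℝ, ψ R * Dg R = f R * g R := by
    intro R
    have hKv : K R = 2 * Real.cosh (R/2)^2 + ((j:ℝ)+1) := by
      simp only [hKdef]; rw [hC2 R]; ring
    simp only [hψdef, hDgdef, hfdef, hgdef]
    rw [hKv]
    have hK2 : (0:ℝ) < 2 * Real.cosh (R/2)^2 + ((j:ℝ)+1) := by positivity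
    field_simp
    ring
  -- Dψ - f positive
  have hDψf : ∀ R : ℝ, 0 < R → 0 < Dψ R - f R := by
    intro R hR
    have hfR : f R = 2 * Real.tanh (R/2)^(j+2) * Real.cosh (R/2)^2 := by
      simp only [hfdef]; rw [hS2 R]; ring
    have hrel : Real.tanh (R/2)^2 * Real.cosh (R/2)^2 = Real.cosh (R/2)^2 - 1 := by
      rw [Real.tanh_eq_sinh_div_cosh, div_pow]
      have hv : Real.cosh (R/2) ≠ 0 := (Real.cosh_pos _).ne'
      field_simp
      linarith [Real.cosh_sq_sub_sinh_sq (R/2)]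
    have hKv : K R = 2 * Real.cosh (R/2)^2 + ((j:ℝ)+1) := by
      simp only [hKdef]; rw [hC2 R]; ring
    have hB : (8*Real.cosh (R/2)^2 + 2*(j:ℝ) - 2) * K R - 8*Real.tanh (R/2)^2*Real.cosh (R/2)^4
        - 2 * (K R)^2 = 4*((j:ℝ)+1) * (Real.tanh (R/2)^2 * Real.cosh (R/2)^2) := by
      rw [hKv]
      linear_combination (-(8*Real.cosh (R/2)^2) - 4*(j:ℝ) - 4) * hrel
    have hKne : K R ≠ 0 := (hK0 R).ne'
    have h : Dψ R - f R = Real.tanh (R/2)^(j+2) * Real.cosh (R/2)^2 *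
        (4*((j:ℝ)+1) * (Real.tanh (R/2)^2 * Real.cosh (R/2)^2)) / (K R)^2 := by
      rw [hfR]
      simp only [hDψdef]
      rw [← hB]
      field_simp
    rw [h]
    have := htpos R hR
    have := Real.cosh_pos (R/2)
    have := hK0 R
    positivity
  -- ψ - I strictly monotone on Ici 0
  have hmono : StrictMonoOn (fun R => ψ R - I R) (Ici 0) := by
    apply strictMonoOn_of_deriv_pos (convex_Ici 0) ((hψc.sub hIc).continuousOn)
    intro x hx
    rw [interior_Ici, mem_Ioi] at hx
    rw [((hψ x).sub (hI x)).deriv]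
    exact hDψf x hx
  have hψI : ∀ R : ℝ, 0 < R → I R < ψ R := by
    intro R hR
    have h0 : ψ 0 - I 0 = 0 := by
      simp only [hψdef, hIdef]
      rw [intervalIntegral.integral_same]
      simp
    have h2 : ψ 0 - I 0 < ψ R - I R := hmono self_mem_Ici (le_of_lt hR) hR
    linarith
  -- H = I / g strictly monotone on Ioi 0
  have hH : StrictMonoOn (fun R => I R / g R) (Ioi 0) := by
    apply strictMonoOn_of_deriv_pos (convex_Ioi 0)
    · exact ContinuousOn.div hIc.continuousOn hgc.continuousOn
        (fun x hx => (hgpos x hx).ne')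
    · intro x hx
      rw [interior_Ioi, mem_Ioi] at hx
      rw [(show HasDerivAt (fun R => I R / g R) _ x from (hI x).div (hg x) (hgpos x hx).ne').deriv]
      have h1 : I x * Dg x < f x * g x := by
        calc I x * Dg x < ψ x * Dg x := by
              exact mul_lt_mul_of_pos_right (hψI x hx) (hDgpos x hx)
          _ = f x * g x := hkey x
      have h2 : (0:ℝ) < g x ^ 2 := pow_pos (hgpos x hx) 2
      apply div_pos _ h2
      linarith
  -- conclude
  intro a ha b hb hab
  rw [mem_Ioi] at ha hb
  have hH' := hH (mem_Ioi.mpr ha) (mem_Ioi.mpr hb) hab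
  simp only
  have hfa : Real.tanh (a/2)^(j+1) * Real.sinh a / I a * Real.tanh (a/2) = g a / I a := by
    simp only [hgdef]; rw [div_mul_eq_mul_div]
  have hfb : Real.tanh (b/2)^(j+1) * Real.sinh b / I b * Real.tanh (b/2) = g b / I b := by
    simp only [hgdef]; rw [div_mul_eq_mul_div]
  show Real.tanh (b/2)^(j+1) * Real.sinh b / I b * Real.tanh (b/2)
      < Real.tanh (a/2)^(j+1) * Real.sinh a / I a * Real.tanh (a/2)
  rw [hfa, hfb]
  rw [div_lt_div_iff₀ (hgpos a ha) (hgpos b hb)] at hH'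
  rw [div_lt_div_iff₀ (hIpos b hb) (hIpos a ha)]
  linarith

theorem eta_tanh_half_strictAnti (m : ℕ) (hm : 1 ≤ m) :
    StrictAntiOn
      (fun R : ℝ =>
        (Real.tanh (R/2)^(2*m) * Real.sinh R /
          ∫ r in (0:ℝ)..R, Real.tanh (r/2)^(2*m) * Real.sinh r) * Real.tanh (R/2))
      (Set.Ioi 0) := by
  exact aux_main (2*m) (by omega)
end
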